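/- arXiv:math/0508359 — 2 statements merged into one kernel-verified Lean document; each statement's English description precedes it below -/
import Mathlib

section
/- A set G ⊆ L_≻ is a ≻-Gröbner basis of L if and only if G is a generating set of L and for every b ∈ ℤ^n and every ≻-critical path (x, z, y) in G(F_{L,b}, G), there exists a ≻-reduction path between x and y in G(F_{L,b}, G). -/
open scoped Classical

noncomputable section

variable {ι : Type*} [Fintype ι]

/-- `x ∈ ℕ^n`, i.e. all coordinates nonnegative. -/
def Nonneg (x : ι → ℤ) : Prop := ∀ i, 0 ≤ x i

/-- componentwise positive part `u⁺`. -/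
def vposPart (x : ι → ℤ) : ι → ℤ := fun i => max (x i) 0

/-- componentwise negative part `u⁻`. -/
def vnegPart (x : ι → ℤ) : ι → ℤ := fun i => max (-x i) 0

/-- support of a vector. -/
def suppV (x : ι → ℤ) : Set ι := {i | x i ≠ 0}

/-- membership in the fiber `F_{L,b} = {x ∈ ℕ^n : x ≡ b (mod L)}`. -/
def inFiber (L : AddSubgroup (ι → ℤ)) (b x : ι → ℤ) : Prop :=
  Nonneg x ∧ x - b ∈ L

/-- adjacency in the fiber graph: `x` and `y` differ by an element of `±S`. -/
def adjS (S : Set (ι → ℤ)) (x y : ι → ℤ) : Prop := x - y ∈ S ∨ y - x ∈ S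

/-- `p 0, p 1, …, p k` is a path in the fiber graph `G(F_{L,b}, S)`. -/
def IsPathIn (L : AddSubgroup (ι → ℤ)) (S : Set (ι → ℤ)) (b : ι → ℤ)
    (k : ℕ) (p : ℕ → ι → ℤ) : Prop :=
  (∀ i ≤ k, inFiber L b (p i)) ∧ ∀ i < k, adjS S (p i) (p (i+1))

/-- `x` and `y` are connected in the fiber graph `G(F_{L,b}, S)`. -/
def ConnIn (L : AddSubgroup (ι → ℤ)) (S : Set (ι → ℤ)) (b x y : ι → ℤ) : Prop :=
  ∃ k p, IsPathIn L S b k p ∧ p 0 = x ∧ p k = y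

/-- `S` is a generating set of the lattice `L`: all fiber graphs are connected. -/
def IsGenSet (L : AddSubgroup (ι → ℤ)) (S : Set (ι → ℤ)) : Prop :=
  ∀ b x y, inFiber L b x → inFiber L b y → ConnIn L S b x y

/-- `succ` (written `≻`) is a term ordering for `L`: an additive total
well-ordering on every fiber. -/
structure IsTermOrder (L : AddSubgroup (ι → ℤ))
    (succ : (ι → ℤ) → (ι → ℤ) → Prop) : Prop where
  trans : ∀ {x y z}, succ x y → succ y z → succ x z
  irrefl : ∀ x, ¬ succ x x
  total : ∀ b x y, inFiber L b x → inFiber L b y → x ≠ y → succ x y ∨ succ y x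
  additive : ∀ x y γ, Nonneg γ → succ x y → succ (x + γ) (y + γ)
  wf : ∀ b, WellFounded (fun x y : ι → ℤ => inFiber L b x ∧ inFiber L b y ∧ succ y x)

/-- `L_≻ = {u ∈ L : u⁺ ≻ u⁻}`. -/
def Lpos (L : AddSubgroup (ι → ℤ)) (succ : (ι → ℤ) → (ι → ℤ) → Prop) :
    Set (ι → ℤ) :=
  {u | u ∈ L ∧ succ (vposPart u) (vnegPart u)}

/-- `m` is the `≻`-minimal element of the fiber `F_{L,b}`. -/
def IsMinimalFiber (L : AddSubgroup (ι → ℤ)) (b : ι → ℤ)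
    (succ : (ι → ℤ) → (ι → ℤ) → Prop) (m : ι → ℤ) : Prop :=
  inFiber L b m ∧ ∀ y, inFiber L b y → y ≠ m → succ y m

/-- `G` is a `≻`-Gröbner basis of `L`: from every `x ∈ ℕ^n` there is a
`≻`-decreasing path in `G(F_{L,x},G)` to the `≻`-minimal element of `F_{L,x}`. -/
def IsGroebner (L : AddSubgroup (ι → ℤ)) (succ : (ι → ℤ) → (ι → ℤ) → Prop)
    (G : Set (ι → ℤ)) : Prop :=
  ∀ x, Nonneg x → ∃ m, IsMinimalFiber L x succ m ∧
    ∃ k p, IsPathIn L G x k p ∧ p 0 = x ∧ p k = m ∧ ∀ i < k, succ (p i) (p (i+1))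

/-- there is a `≻`-reduction path from `x` to `y` in `G(F_{L,b},G)`:
no intermediate node is `≻` than both endpoints. -/
def IsRedPath (L : AddSubgroup (ι → ℤ)) (G : Set (ι → ℤ)) (b : ι → ℤ)
    (succ : (ι → ℤ) → (ι → ℤ) → Prop) (x y : ι → ℤ) : Prop :=
  ∃ k p, IsPathIn L G b k p ∧ p 0 = x ∧ p k = y ∧
    ∀ i, 0 < i → i < k → ¬ (succ (p i) x ∧ succ (p i) y)

/-- `(x,z,y)` is a `≻`-critical path in `G(F_{L,b},G)`. -/
def IsCriticalIn (L : AddSubgroup (ι → ℤ)) (G : Set (ι → ℤ)) (b : ι → ℤ)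
    (succ : (ι → ℤ) → (ι → ℤ) → Prop) (x z y : ι → ℤ) : Prop :=
  inFiber L b x ∧ inFiber L b z ∧ inFiber L b y ∧
  adjS G x z ∧ adjS G z y ∧ succ z x ∧ succ z y

/-- `z^(u,v) := max{u⁺, v⁺}` componentwise. -/
def zOf (u v : ι → ℤ) : ι → ℤ := fun i => max (vposPart u i) (vposPart v i)

/-- `x^(u,v) := z^(u,v) − u`. -/
def xOf (u v : ι → ℤ) : ι → ℤ := zOf u v - u

/-- `y^(u,v) := z^(u,v) − v`. -/
def yOf (u v : ι → ℤ) : ι → ℤ := zOf u v - v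

/-- `(x,z,y)` is a `≻`-critical path for the pair `(u,v)`. -/
def IsCriticalFor (succ : (ι → ℤ) → (ι → ℤ) → Prop) (u v x z y : ι → ℤ) : Prop :=
  Nonneg x ∧ Nonneg z ∧ Nonneg y ∧ z - x = u ∧ z - y = v ∧ succ z x ∧ succ z y

/-- rational inner product `φ·x`. -/
def qdot (φ : ι → ℚ) (x : ι → ℤ) : ℚ := ∑ i, φ i * (x i : ℚ)

/-- there is a `φ`-reduction path from `x` to `y` in `G(F_{L,b},G)`. -/
def IsPhiRedPath (L : AddSubgroup (ι → ℤ)) (G : Set (ι → ℤ)) (b : ι → ℤ)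
    (φ : ι → ℚ) (x y : ι → ℤ) : Prop :=
  ∃ k p, IsPathIn L G b k p ∧ p 0 = x ∧ p k = y ∧
    ∀ i, 0 < i → i < k → ¬ (qdot φ x < qdot φ (p i) ∧ qdot φ y < qdot φ (p i))

/-- `G` is a `φ`-Gröbner basis of `L`. -/
def IsPhiGroebner (L : AddSubgroup (ι → ℤ)) (φ : ι → ℚ) (G : Set (ι → ℤ)) : Prop :=
  ∀ b x y, inFiber L b x → inFiber L b y → IsPhiRedPath L G b φ x y

/-- `x ∧_σ y`: componentwise min on `σ`, zero elsewhere. -/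
def meetOn (σ : Set ι) (x y : ι → ℤ) : ι → ℤ :=
  fun i => if i ∈ σ then min (x i) (y i) else 0

/-- `T` is `σ`-saturated on `S`. -/
def IsSaturatedOn (L : AddSubgroup (ι → ℤ)) (σ : Set ι) (S T : Set (ι → ℤ)) : Prop :=
  ∀ b x y, inFiber L b x → inFiber L b y → ConnIn L S b x y →
    ConnIn L T (b - meetOn σ x y) (x - meetOn σ x y) (y - meetOn σ x y)

/-- membership in `F^σ_{L,b}`: nonnegative outside `σ`. -/
def inFiberFree (L : AddSubgroup (ι → ℤ)) (σ : Set ι) (b x : ι → ℤ) : Prop :=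
  (∀ i, i ∉ σ → 0 ≤ x i) ∧ x - b ∈ L

/-- path in the graph `G(F^σ_{L,b}, S)`. -/
def IsPathFree (L : AddSubgroup (ι → ℤ)) (σ : Set ι) (S : Set (ι → ℤ)) (b : ι → ℤ)
    (k : ℕ) (p : ℕ → ι → ℤ) : Prop :=
  (∀ i ≤ k, inFiberFree L σ b (p i)) ∧ ∀ i < k, adjS S (p i) (p (i+1))

/-- connectivity in `G(F^σ_{L,b}, S)`. -/
def ConnFree (L : AddSubgroup (ι → ℤ)) (σ : Set ι) (S : Set (ι → ℤ))
    (b x y : ι → ℤ) : Prop :=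
  ∃ k p, IsPathFree L σ S b k p ∧ p 0 = x ∧ p k = y

/-- `S` is a `σ`-generating set of `L`. -/
def IsGenSetFree (L : AddSubgroup (ι → ℤ)) (σ : Set ι) (S : Set (ι → ℤ)) : Prop :=
  ∀ b x y, inFiberFree L σ b x → inFiberFree L σ b y → ConnFree L σ S b x y

/-- there is a `z`-bounded path from `x` to `y` in `G(F_{L,b},G)`:
all nodes are `≺ z`. -/
def IsBoundedPath (L : AddSubgroup (ι → ℤ)) (G : Set (ι → ℤ)) (b : ι → ℤ)
    (succ : (ι → ℤ) → (ι → ℤ) → Prop) (z x y : ι → ℤ) : Prop :=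
  ∃ k p, IsPathIn L G b k p ∧ p 0 = x ∧ p k = y ∧ ∀ i ≤ k, succ z (p i)

/-- `ē^i = −e^i` as a rational vector. -/
def ebar [DecidableEq ι] (i : ι) : ι → ℚ := fun j => if j = i then -1 else 0

/-- projection deleting the `i`-th coordinate. -/
def projCoord {n : ℕ} (i : Fin (n+1)) : (Fin (n+1) → ℤ) →+ (Fin n → ℤ) where
  toFun x := fun j => x (i.succAbove j)
  map_zero' := rfl
  map_add' _ _ := rfl

/-- projection onto the coordinates outside `σ`. -/
def projSet {n : ℕ} (σ : Finset (Fin n)) :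
    (Fin n → ℤ) →+ ({ i : Fin n // i ∉ σ } → ℤ) where
  toFun x := fun j => x j.1
  map_zero' := rfl
  map_add' _ _ := rfl

end

section Aux

variable {ι : Type*} [Fintype ι] {L : AddSubgroup (ι → ℤ)}
  {succ : (ι → ℤ) → (ι → ℤ) → Prop} {G : Set (ι → ℤ)} {b : ι → ℤ}

lemma adjS_symm {S : Set (ι → ℤ)} {a c : ι → ℤ} (h : adjS S a c) : adjS S c a := h.symm

lemma succ_edge (hto : IsTermOrder L succ) {u x : ι → ℤ} (hu : u ∈ Lpos L succ)
    (hx : Nonneg x) (hxu : Nonneg (x - u)) : succ x (x - u) := by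
  have hγ : Nonneg (x - vposPart u) := by
    intro i
    have h1 := hx i
    have h2 := hxu i
    simp only [Pi.sub_apply, vposPart] at h2 ⊢
    rcases le_total (u i) 0 with h | h
    · rw [max_eq_right h]; omega
    · rw [max_eq_left h]; omega
  have h := hto.additive _ _ _ hγ hu.2
  have e1 : vposPart u + (x - vposPart u) = x := by abel
  have e2 : vnegPart u + (x - vposPart u) = x - u := by
    funext i
    simp only [Pi.add_apply, Pi.sub_apply, vposPart, vnegPart]
    rcases le_total (u i) 0 with h' | h'
    · rw [max_eq_right h', max_eq_left (by omega : (0:ℤ) ≤ -u i)]; ring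
    · rw [max_eq_left h', max_eq_right (by omega : -u i ≤ (0:ℤ))]; ring
  rwa [e1, e2] at h

lemma adj_succ (hto : IsTermOrder L succ) (hG : G ⊆ Lpos L succ) {a c : ι → ℤ}
    (h : adjS G a c) (ha : Nonneg a) (hc : Nonneg c) : succ a c ∨ succ c a := by
  rcases h with h | h
  · left
    have e : a - (a - c) = c := by abel
    have := succ_edge hto (hG h) ha (by rw [e]; exact hc)
    rwa [e] at this
  · right
    have e : c - (c - a) = a := by abel
    have := succ_edge hto (hG h) hc (by rw [e]; exact ha)
    rwa [e] at this

lemma fiber_shift {x : ι → ℤ} (hx : x - b ∈ L) (w : ι → ℤ) :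
    inFiber L b w ↔ inFiber L x w := by
  constructor
  · rintro ⟨h1, h2⟩
    exact ⟨h1, sub_sub_sub_cancel_right w x b ▸ sub_mem h2 hx⟩
  · rintro ⟨h1, h2⟩
    exact ⟨h1, sub_add_sub_cancel w x b ▸ add_mem h2 hx⟩

lemma exists_min (hto : IsTermOrder L succ) {x : ι → ℤ} (hx : inFiber L b x) :
    ∃ m, IsMinimalFiber L b succ m := by
  obtain ⟨m, hm, hmin⟩ := (hto.wf b).has_min {w | inFiber L b w} ⟨x, hx⟩
  refine ⟨m, hm, fun y hy hne => ?_⟩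
  rcases hto.total b y m hy hm hne with h | h
  · exact h
  · exact absurd ⟨hy, hm, h⟩ (hmin y hy)

lemma min_unique (hto : IsTermOrder L succ) {m1 m2 : ι → ℤ}
    (h1 : IsMinimalFiber L b succ m1) (h2 : IsMinimalFiber L b succ m2) : m1 = m2 := by
  by_contra hne
  exact hto.irrefl m1 (hto.trans (h2.2 m1 h1.1 hne) (h1.2 m2 h2.1 (Ne.symm hne)))

lemma succ_chain (hto : IsTermOrder L succ) {k : ℕ} {p : ℕ → ι → ℤ}
    (hdec : ∀ i < k, succ (p i) (p (i+1))) :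
    ∀ i, 0 < i → i ≤ k → succ (p 0) (p i) := by
  intro i
  induction i with
  | zero => omega
  | succ j ih =>
    intro _ hj
    rcases Nat.eq_zero_or_pos j with rfl | hj0
    · exact hdec 0 (by omega)
    · exact hto.trans (ih hj0 (by omega)) (hdec j (by omega))

lemma exists_max_val (hto : IsTermOrder L succ) {p : ℕ → ι → ℤ}
    (s : Finset ℕ) (hs : s.Nonempty) (hf : ∀ i ∈ s, inFiber L b (p i)) :
    ∃ i ∈ s, ∀ j ∈ s, p j = p i ∨ succ (p i) (p j) := by
  classical
  induction s using Finset.induction with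
  | empty => exact absurd hs (by simp)
  | @insert a s ha ih =>
    rcases s.eq_empty_or_nonempty with rfl | hs'
    · exact ⟨a, by simp, by simp⟩
    · obtain ⟨i, hi, hmax⟩ := ih hs' (fun j hj => hf j (Finset.mem_insert_of_mem hj))
      by_cases hea : p a = p i
      · refine ⟨i, Finset.mem_insert_of_mem hi, fun j hj => ?_⟩
        rcases Finset.mem_insert.mp hj with rfl | hj'
        · exact Or.inl hea
        · exact hmax j hj'
      · rcases hto.total b (p a) (p i) (hf a (Finset.mem_insert_self a s))
          (hf i (Finset.mem_insert_of_mem hi)) hea with h | h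
        · refine ⟨a, Finset.mem_insert_self a s, fun j hj => ?_⟩
          rcases Finset.mem_insert.mp hj with rfl | hj'
          · exact Or.inl rfl
          · rcases hmax j hj' with he | hl
            · exact Or.inr (he ▸ h)
            · exact Or.inr (hto.trans h hl)
        · refine ⟨i, Finset.mem_insert_of_mem hi, fun j hj => ?_⟩
          rcases Finset.mem_insert.mp hj with rfl | hj'
          · exact Or.inr h
          · exact hmax j hj'

end Aux

section Aux2
set_option linter.unusedSectionVars false
set_option maxHeartbeats 1000000

variable {ι : Type*} [Fintype ι] {L : AddSubgroup (ι → ℤ)}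
  {succ : (ι → ℤ) → (ι → ℤ) → Prop} {G : Set (ι → ℤ)} {b : ι → ℤ}

lemma groebner_red (hto : IsTermOrder L succ) (hGr : IsGroebner L succ G)
    {x y : ι → ℤ} (hx : inFiber L b x) (hy : inFiber L b y) :
    IsRedPath L G b succ x y := by
  obtain ⟨mx, hmx, k1, px, hpx, hpx0, hpxk, hdx⟩ := hGr x hx.1
  obtain ⟨my, hmy, k2, py, hpy, hpy0, hpyk, hdy⟩ := hGr y hy.1
  have hshx := fiber_shift (L := L) hx.2
  have hshy := fiber_shift (L := L) hy.2
  have hmx' : IsMinimalFiber L b succ mx :=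
    ⟨(hshx mx).2 hmx.1, fun w hw hne => hmx.2 w ((hshx w).1 hw) hne⟩
  have hmy' : IsMinimalFiber L b succ my :=
    ⟨(hshy my).2 hmy.1, fun w hw hne => hmy.2 w ((hshy w).1 hw) hne⟩
  have hmm : mx = my := min_unique hto hmx' hmy'
  set r : ℕ → ι → ℤ := fun j => if j ≤ k1 then px j else py (k2 - (j - k1)) with hr
  have hrv1 : ∀ j ≤ k1, r j = px j := by
    intro j hj; simp only [hr, if_pos hj]
  have hrv2 : ∀ j, k1 < j → j ≤ k1 + k2 → r j = py (k2 - (j - k1)) := by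
    intro j h1 h2; simp only [hr]; rw [if_neg (show ¬ j ≤ k1 by omega)]
  refine ⟨k1 + k2, r, ⟨?_, ?_⟩, ?_, ?_, ?_⟩
  · intro j hj
    rcases le_or_gt j k1 with h | h
    · rw [hrv1 j h]; exact (hshx _).2 (hpx.1 j h)
    · rw [hrv2 j h hj]; exact (hshy _).2 (hpy.1 _ (by omega))
  · intro j hj
    rcases le_or_gt (j+1) k1 with h | h
    · rw [hrv1 j (by omega), hrv1 (j+1) h]; exact hpx.2 j (by omega)
    · rcases le_or_gt j k1 with h2 | h2
      · -- j = k1, k2 ≥ 1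
        have hj1 : j = k1 := by omega
        have hk2 : 0 < k2 := by omega
        rw [hrv1 j h2, hrv2 (j+1) (by omega) (by omega)]
        have e : k2 - (j + 1 - k1) = k2 - 1 := by omega
        rw [e, hj1, hpxk, hmm, ← hpyk]
        have := hpy.2 (k2-1) (by omega)
        rw [show k2 - 1 + 1 = k2 by omega] at this
        exact adjS_symm this
      · rw [hrv2 j h2 (by omega), hrv2 (j+1) (by omega) (by omega)]
        set t := k2 - (j + 1 - k1) with ht
        have e : k2 - (j - k1) = t + 1 := by omega
        rw [e]
        exact adjS_symm (hpy.2 t (by omega))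
  · rw [hrv1 0 (by omega)]; exact hpx0
  · rcases Nat.eq_zero_or_pos k2 with h | h
    · rw [hrv1 (k1+k2) (by omega), show k1 + k2 = k1 by omega, hpxk, hmm, ← hpyk,
        show k2 = 0 from h, hpy0]
    · rw [hrv2 (k1+k2) (by omega) le_rfl, show k2 - (k1 + k2 - k1) = 0 by omega, hpy0]
  · intro i hi0 hik
    rintro ⟨hsx, hsy⟩
    rcases le_or_gt i k1 with h | h
    · rw [hrv1 i h] at hsx
      have := succ_chain hto hdx i hi0 h
      rw [hpx0] at this
      exact hto.irrefl x (hto.trans this hsx)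
    · rw [hrv2 i h (by omega)] at hsy
      set t := k2 - (i - k1) with ht
      have := succ_chain hto hdy t (by omega) (by omega)
      rw [hpy0] at this
      exact hto.irrefl y (hto.trans this hsy)

end Aux2

section Aux3
set_option linter.unusedSectionVars false
set_option maxHeartbeats 1000000

variable {ι : Type*} [Fintype ι] {L : AddSubgroup (ι → ℤ)}
  {succ : (ι → ℤ) → (ι → ℤ) → Prop} {G : Set (ι → ℤ)} {b : ι → ℤ}

lemma red_all (hto : IsTermOrder L succ) (hG : G ⊆ Lpos L succ) (hgen : IsGenSet L G)
    (hcrit : ∀ b x z y, IsCriticalIn L G b succ x z y → IsRedPath L G b succ x y)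
    {x y : ι → ℤ} (hx : inFiber L b x) (hy : inFiber L b y) :
    IsRedPath L G b succ x y := by
  classical
  have main : ∀ v, inFiber L b v → ∀ c k (p : ℕ → ι → ℤ), IsPathIn L G b k p →
      p 0 = x → p k = y →
      (∀ i, 0 < i → i < k → succ (p i) x → succ (p i) y → (p i = v ∨ succ v (p i))) →
      ((Finset.Ioo 0 k).filter (fun i => p i = v ∧ succ (p i) x ∧ succ (p i) y)).card ≤ c →
      IsRedPath L G b succ x y := by
    intro v
    refine (hto.wf b).induction
      (C := fun v => inFiber L b v → ∀ c k (p : ℕ → ι → ℤ), IsPathIn L G b k p →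
        p 0 = x → p k = y →
        (∀ i, 0 < i → i < k → succ (p i) x → succ (p i) y → (p i = v ∨ succ v (p i))) →
        ((Finset.Ioo 0 k).filter
          (fun i => p i = v ∧ succ (p i) x ∧ succ (p i) y)).card ≤ c →
        IsRedPath L G b succ x y) v ?_
    clear v
    intro v IH hv c
    induction c using Nat.strong_induction_on with
    | _ c IH2 =>
    intro k p hp h0 hk hbnd hcnt
    by_cases hvB : ∃ i, 0 < i ∧ i < k ∧ p i = v ∧ succ (p i) x ∧ succ (p i) y
    · obtain ⟨i, hi0, hik, hpi, hsx, hsy⟩ := hvB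
      have hfib : ∀ j ≤ k, inFiber L b (p j) := hp.1
      have hadj1 : adjS G (p (i-1)) (p i) := by
        have := hp.2 (i-1) (by omega)
        rwa [show i - 1 + 1 = i by omega] at this
      have hadj2 : adjS G (p i) (p (i+1)) := hp.2 i hik
      have hvx : succ v x := hpi ▸ hsx
      have hvy : succ v y := hpi ▸ hsy
      -- the left neighbour is below v
      have hn1 : succ v (p (i-1)) := by
        rcases adj_succ hto hG hadj1 (hfib _ (by omega)).1 (hfib _ (by omega)).1 with h | h
        · exfalso
          rw [hpi] at h
          rcases Nat.eq_zero_or_pos (i-1) with h10 | h10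
          · rw [h10, h0] at h
            exact hto.irrefl x (hto.trans h hvx)
          · have hb1 : succ (p (i-1)) x := hto.trans h hvx
            have hb2 : succ (p (i-1)) y := hto.trans h hvy
            rcases hbnd (i-1) h10 (by omega) hb1 hb2 with he | hlt
            · rw [he] at h; exact hto.irrefl v h
            · exact hto.irrefl v (hto.trans hlt h)
        · rw [hpi] at h; exact h
      -- the right neighbour is below v
      have hn2 : succ v (p (i+1)) := by
        rcases adj_succ hto hG hadj2 (hfib _ (by omega)).1 (hfib _ (by omega)).1 with h | h
        · rw [hpi] at h; exact h
        · exfalso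
          rw [hpi] at h
          rcases Nat.lt_or_ge (i+1) k with h1k | h1k
          · have hb1 : succ (p (i+1)) x := hto.trans h hvx
            have hb2 : succ (p (i+1)) y := hto.trans h hvy
            rcases hbnd (i+1) (by omega) h1k hb1 hb2 with he | hlt
            · rw [he] at h; exact hto.irrefl v h
            · exact hto.irrefl v (hto.trans hlt h)
          · have e : i + 1 = k := by omega
            rw [e, hk] at h
            exact hto.irrefl y (hto.trans h hvy)
      have hcr : IsCriticalIn L G b succ (p (i-1)) (p i) (p (i+1)) :=
        ⟨hfib _ (by omega), hfib _ (by omega), hfib _ (by omega), hadj1, hadj2,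
          by rw [hpi]; exact hn1, by rw [hpi]; exact hn2⟩
      obtain ⟨k2, q, hq, hq0, hqk2, hqred⟩ := hcrit b (p (i-1)) (p i) (p (i+1)) hcr
      have hqv : ∀ t ≤ k2, succ v (q t) := by
        intro t ht
        rcases Nat.eq_zero_or_pos t with rfl | ht0
        · rw [hq0]; exact hn1
        rcases eq_or_lt_of_le ht with rfl | htk
        · rw [hqk2]; exact hn2
        · have hfq : inFiber L b (q t) := hq.1 t ht
          by_cases he : q t = v
          · exact absurd ⟨by rw [he]; exact hn1, by rw [he]; exact hn2⟩ (hqred t ht0 htk)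
          rcases hto.total b (q t) v hfq hv he with h | h
          · exact absurd ⟨hto.trans h hn1, hto.trans h hn2⟩ (hqred t ht0 htk)
          · exact h
      -- splice
      set k' := k + k2 - 2 with hk'
      set p' : ℕ → ι → ℤ :=
        fun j => if j ≤ i - 1 then p j else if j ≤ i - 1 + k2 then q (j - (i-1))
          else p (j + 2 - k2) with hp'def
      have hv1 : ∀ j ≤ i - 1, p' j = p j := by
        intro j hj; simp only [hp'def]; rw [if_pos hj]
      have hv2 : ∀ t ≤ k2, p' (i - 1 + t) = q t := by
        intro t ht
        simp only [hp'def]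
        split_ifs with h1 h2
        · have ht0 : t = 0 := by omega
          subst ht0
          simpa using hq0.symm
        · rw [show i - 1 + t - (i - 1) = t from by omega]
        · omega
      have hv3 : ∀ j, i - 1 + k2 ≤ j → p' j = p (j + 2 - k2) := by
        intro j hj
        simp only [hp'def]
        split_ifs with h1 h2
        · have e1 : j = i - 1 := by omega
          have e2 : k2 = 0 := by omega
          rw [e2] at hqk2
          rw [e1, show i - 1 + 2 - k2 = i + 1 by omega, ← hqk2, hq0]
        · rw [show j - (i-1) = k2 by omega, hqk2, show j + 2 - k2 = i + 1 from by omega]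
        · rfl
      have hppath : IsPathIn L G b k' p' := by
        constructor
        · intro j hj
          rcases le_or_gt j (i-1) with h | h
          · rw [hv1 j h]; exact hfib j (by omega)
          · rcases le_or_gt j (i - 1 + k2) with h2 | h2
            · obtain ⟨t, rfl⟩ : ∃ t, j = i - 1 + t := ⟨j - (i-1), by omega⟩
              rw [hv2 t (by omega)]
              exact hq.1 _ (by omega)
            · rw [hv3 j (by omega)]; exact hfib _ (by omega)
        · intro j hj
          rcases le_or_gt (j+1) (i-1) with h | h
          · rw [hv1 j (by omega), hv1 (j+1) h]; exact hp.2 j (by omega)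
          · rcases le_or_gt (j+1) (i - 1 + k2) with h2 | h2
            · obtain ⟨t, rfl⟩ : ∃ t, j = i - 1 + t := ⟨j - (i-1), by omega⟩
              rw [hv2 t (by omega), show i - 1 + t + 1 = i - 1 + (t+1) by omega,
                hv2 (t+1) (by omega)]
              exact hq.2 t (by omega)
            · rw [hv3 j (by omega), hv3 (j+1) (by omega),
                show j + 1 + 2 - k2 = (j + 2 - k2) + 1 by omega]
              exact hp.2 (j + 2 - k2) (by omega)
      have h0' : p' 0 = x := by rw [hv1 0 (by omega)]; exact h0
      have hk'' : p' k' = y := by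
        rw [hv3 k' (by omega), show k' + 2 - k2 = k by omega]; exact hk
      have hbnd' : ∀ j, 0 < j → j < k' → succ (p' j) x → succ (p' j) y →
          (p' j = v ∨ succ v (p' j)) := by
        intro j hj0 hjk hbx hby
        rcases le_or_gt j (i-1) with h | h
        · rw [hv1 j h] at hbx hby ⊢
          exact hbnd j hj0 (by omega) hbx hby
        · rcases lt_or_ge j (i - 1 + k2) with h2 | h2
          · obtain ⟨t, rfl⟩ : ∃ t, j = i - 1 + t := ⟨j - (i-1), by omega⟩
            rw [hv2 t (by omega)]
            exact Or.inr (hqv t (by omega))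
          · rw [hv3 j h2] at hbx hby ⊢
            exact hbnd _ (by omega) (by omega) hbx hby
      -- counting
      set oldS := (Finset.Ioo 0 k).filter (fun j => p j = v ∧ succ (p j) x ∧ succ (p j) y)
        with holdS
      set newS := (Finset.Ioo 0 k').filter
        (fun j => p' j = v ∧ succ (p' j) x ∧ succ (p' j) y) with hnewS
      have hmemi : i ∈ oldS :=
        Finset.mem_filter.mpr ⟨Finset.mem_Ioo.mpr ⟨hi0, hik⟩, hpi, hsx, hsy⟩
      have hsplit : ∀ j ∈ newS, j ≤ i - 1 ∨ i - 1 + k2 ≤ j := by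
        intro j hj
        obtain ⟨hjI, hjv, _, _⟩ := Finset.mem_filter.mp hj
        by_contra hcon
        push_neg at hcon
        obtain ⟨t, rfl⟩ : ∃ t, j = i - 1 + t := ⟨j - (i-1), by omega⟩
        rw [hv2 t (by omega)] at hjv
        have hcv := hqv t (by omega)
        rw [hjv] at hcv
        exact hto.irrefl v hcv
      set f : ℕ → ℕ := fun j => if j ≤ i - 1 then j else j + 2 - k2 with hf
      have hmap : ∀ j ∈ newS, f j ∈ oldS.erase i := by
        intro j hj
        obtain ⟨hjI, hjv, hjx, hjy⟩ := Finset.mem_filter.mp hj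
        rw [Finset.mem_Ioo] at hjI
        rcases hsplit j hj with h | h
        · rw [hv1 j h] at hjv hjx hjy
          simp only [hf]
          rw [if_pos h]
          exact Finset.mem_erase.mpr ⟨by omega,
            Finset.mem_filter.mpr ⟨Finset.mem_Ioo.mpr ⟨by omega, by omega⟩, hjv, hjx, hjy⟩⟩
        · by_cases hle : j ≤ i - 1
          · -- k2 = 0, j = i - 1; then j + 2 - k2 = i + 1, but f j = j here
            rw [hv1 j hle] at hjv hjx hjy
            simp only [hf]
            rw [if_pos hle]
            exact Finset.mem_erase.mpr ⟨by omega,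
              Finset.mem_filter.mpr ⟨Finset.mem_Ioo.mpr ⟨by omega, by omega⟩, hjv, hjx, hjy⟩⟩
          · rw [hv3 j h] at hjv hjx hjy
            simp only [hf]
            rw [if_neg hle]
            exact Finset.mem_erase.mpr ⟨by omega,
              Finset.mem_filter.mpr ⟨Finset.mem_Ioo.mpr ⟨by omega, by omega⟩, hjv, hjx, hjy⟩⟩
      have hinj : Set.InjOn f newS := by
        intro j1 hj1 j2 hj2 he
        have h1 := hsplit j1 hj1
        have h2 := hsplit j2 hj2
        simp only [hf] at he
        split_ifs at he <;> omega
      have hcard : newS.card ≤ c - 1 := by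
        have h1 : newS.card ≤ (oldS.erase i).card :=
          Finset.card_le_card_of_injOn f hmap hinj
        have h2 : (oldS.erase i).card = oldS.card - 1 := Finset.card_erase_of_mem hmemi
        have h3 : 1 ≤ oldS.card := Finset.card_pos.mpr ⟨i, hmemi⟩
        omega
      have hcpos : 1 ≤ c := le_trans (Finset.card_pos.mpr ⟨i, hmemi⟩) hcnt
      exact IH2 (c-1) (by omega) k' p' hppath h0' hk'' hbnd' hcard
    · by_cases hB : ∃ j, 0 < j ∧ j < k ∧ succ (p j) x ∧ succ (p j) y
      · set Bad := (Finset.Ioo 0 k).filter (fun j => succ (p j) x ∧ succ (p j) y) with hBad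
        obtain ⟨j0, hj01, hj02, hj03, hj04⟩ := hB
        have hne : Bad.Nonempty :=
          ⟨j0, Finset.mem_filter.mpr ⟨Finset.mem_Ioo.mpr ⟨hj01, hj02⟩, hj03, hj04⟩⟩
        obtain ⟨i0, hi0, hmax⟩ := exists_max_val hto Bad hne (fun j hj => hp.1 j
          (le_of_lt (Finset.mem_Ioo.mp (Finset.mem_filter.mp hj).1).2))
        obtain ⟨hi0I, hi0x, hi0y⟩ := Finset.mem_filter.mp hi0
        rw [Finset.mem_Ioo] at hi0I
        have hfi0 : inFiber L b (p i0) := hp.1 i0 (by omega)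
        have hlt : succ v (p i0) := by
          rcases hbnd i0 hi0I.1 hi0I.2 hi0x hi0y with he | h
          · exact absurd ⟨i0, hi0I.1, hi0I.2, he, hi0x, hi0y⟩ hvB
          · exact h
        exact IH (p i0) ⟨hfi0, hv, hlt⟩ hfi0
          (((Finset.Ioo 0 k).filter
            (fun j => p j = p i0 ∧ succ (p j) x ∧ succ (p j) y)).card) k p hp h0 hk
          (fun j hj0 hjk hsx hsy => hmax j
            (Finset.mem_filter.mpr ⟨Finset.mem_Ioo.mpr ⟨hj0, hjk⟩, hsx, hsy⟩)) le_rfl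
      · exact ⟨k, p, hp, h0, hk, fun j hj0 hjk hc => hB ⟨j, hj0, hjk, hc.1, hc.2⟩⟩
  -- kick off
  obtain ⟨k, p, hp, h0, hk⟩ := hgen b x y hx hy
  by_cases hB : ∃ j, 0 < j ∧ j < k ∧ succ (p j) x ∧ succ (p j) y
  · set Bad := (Finset.Ioo 0 k).filter (fun j => succ (p j) x ∧ succ (p j) y) with hBad
    obtain ⟨j0, hj01, hj02, hj03, hj04⟩ := hB
    have hne : Bad.Nonempty :=
      ⟨j0, Finset.mem_filter.mpr ⟨Finset.mem_Ioo.mpr ⟨hj01, hj02⟩, hj03, hj04⟩⟩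
    obtain ⟨i0, hi0, hmax⟩ := exists_max_val hto Bad hne (fun j hj => hp.1 j
      (le_of_lt (Finset.mem_Ioo.mp (Finset.mem_filter.mp hj).1).2))
    obtain ⟨hi0I, hi0x, hi0y⟩ := Finset.mem_filter.mp hi0
    rw [Finset.mem_Ioo] at hi0I
    exact main (p i0) (hp.1 i0 (by omega)) _ k p hp h0 hk
      (fun j hj0 hjk hsx hsy => hmax j
        (Finset.mem_filter.mpr ⟨Finset.mem_Ioo.mpr ⟨hj0, hjk⟩, hsx, hsy⟩)) le_rfl
  · exact ⟨k, p, hp, h0, hk, fun j hj0 hjk hc => hB ⟨j, hj0, hjk, hc.1, hc.2⟩⟩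

end Aux3


set_option maxHeartbeats 1000000 in
/-- `G ⊆ L_≻` is a `≻`-Gröbner basis of `L` iff `G` is a
generating set of `L` and every `≻`-critical path in any fiber graph admits a
`≻`-reduction path between its endpoints. -/
theorem stmt3 {n : ℕ} (L : AddSubgroup (Fin n → ℤ))
    (hL : ∀ u ∈ L, Nonneg u → u = 0)
    (succ : (Fin n → ℤ) → (Fin n → ℤ) → Prop) (hto : IsTermOrder L succ)
    (G : Set (Fin n → ℤ)) (hG : G ⊆ Lpos L succ) :
    IsGroebner L succ G ↔
      (IsGenSet L G ∧ ∀ b x z y, IsCriticalIn L G b succ x z y →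
        IsRedPath L G b succ x y) := by
  constructor
  · intro hGr
    refine ⟨fun b x y hx hy => ?_, fun b x z y hc => groebner_red hto hGr hc.1 hc.2.2.1⟩
    obtain ⟨k, p, hp, h0, hk, _⟩ := groebner_red hto hGr hx hy
    exact ⟨k, p, hp, h0, hk⟩
  · rintro ⟨hgen, hcrit⟩
    intro x hx
    have hxf : inFiber L x x := ⟨hx, by simpa using L.zero_mem⟩
    obtain ⟨m, hm⟩ := exists_min hto hxf
    refine ⟨m, hm, ?_⟩
    have key : ∀ w, inFiber L x w → ∃ k p, IsPathIn L G x k p ∧ p 0 = w ∧ p k = m ∧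
        ∀ i < k, succ (p i) (p (i+1)) := by
      intro w
      refine (hto.wf x).induction
        (C := fun w => inFiber L x w → ∃ k p, IsPathIn L G x k p ∧ p 0 = w ∧ p k = m ∧
          ∀ i < k, succ (p i) (p (i+1))) w ?_
      clear w
      intro w IH hw
      by_cases hwm : w = m
      · subst hwm
        exact ⟨0, fun _ => w, ⟨fun _ _ => hw, fun i hi => absurd hi (Nat.not_lt_zero i)⟩,
          rfl, rfl, fun i hi => absurd hi (Nat.not_lt_zero i)⟩
      · have hwm' : succ w m := hm.2 w hw hwm
        obtain ⟨k, p, hp, h0, hk, hred⟩ := red_all hto hG hgen hcrit hw hm.1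
        have hk0 : 0 < k := by
          rcases Nat.eq_zero_or_pos k with h | h
          · exact absurd (by rw [← h0, ← hk, h]) hwm
          · exact h
        have hstep : succ w (p 1) := by
          have hadj : adjS G (p 0) (p 1) := hp.2 0 hk0
          rcases adj_succ hto hG hadj (hp.1 0 (by omega)).1 (hp.1 1 (by omega)).1 with h | h
          · rw [h0] at h; exact h
          · exfalso
            rw [h0] at h
            rcases Nat.lt_or_ge 1 k with h1k | h1k
            · exact hred 1 (by omega) h1k ⟨h, hto.trans h hwm'⟩
            · have e : 1 = k := by omega
              rw [e, hk] at h
              exact hto.irrefl w (hto.trans hwm' h)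
        obtain ⟨k2, q, hq, hq0, hqk, hqdec⟩ :=
          IH (p 1) ⟨hp.1 1 hk0, hw, hstep⟩ (hp.1 1 hk0)
        refine ⟨k2 + 1, fun j => if j = 0 then w else q (j - 1), ⟨?_, ?_⟩, by simp, ?_, ?_⟩
        · intro j hj
          by_cases h : j = 0
          · simpa [h] using hw
          · simp only [if_neg h]; exact hq.1 (j-1) (by omega)
        · intro j hj
          by_cases h : j = 0
          · subst h
            simp only [if_pos rfl, if_neg one_ne_zero]
            rw [show (1:ℕ) - 1 = 0 from rfl, hq0, ← h0]
            exact hp.2 0 hk0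
          · simp only [if_neg h, if_neg (by omega : ¬ j + 1 = 0)]
            rw [show j + 1 - 1 = (j-1) + 1 by omega]
            exact hq.2 (j-1) (by omega)
        · simp only [if_neg (by omega : ¬ k2 + 1 = 0)]
          rw [show k2 + 1 - 1 = k2 from rfl]
          exact hqk
        · intro j hj
          by_cases h : j = 0
          · subst h
            simp only [if_pos rfl, if_neg one_ne_zero]
            rw [show (1:ℕ) - 1 = 0 from rfl, hq0]
            exact hstep
          · simp only [if_neg h, if_neg (by omega : ¬ j + 1 = 0)]
            rw [show j + 1 - 1 = (j-1) + 1 by omega]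
            exact hqdec (j-1) (by omega)
    exact key x hxf
end

section
/- A set G ⊆ L_≻ is a ≻-Gröbner basis of L if and only if G is a generating set of L and for each pair u, v ∈ G there exists a ≻-reduction path between x^(u,v) and y^(u,v) in G(F_{L, z^(u,v)}, G), where z^(u,v) := max{u⁺, v⁺} component-wise, x^(u,v) := z^(u,v) − u, and y^(u,v) := z^(u,v) − v. -/
/-!
Both sides are equivalent to: any two points of a common fiber are joined by a `≻`-reduction
path. A Gröbner basis joins both points to the `≻`-minimum of their fiber by decreasing paths;
conversely, well-founded induction straightens reduction paths to the minimum into decreasing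
ones.

For the pair criterion, take a path in the fiber graph and its `≻`-largest node `z`. An interior
visit of `z` is the peak of a critical path `x — z — y` with `u = z - x` and `v = z - y` in `G`.
This is the translate by `z - z^(u,v) ≥ 0` of `x^(u,v) — z^(u,v) — y^(u,v)`, and the translate of
the assumed reduction path between `x^(u,v)` and `y^(u,v)` bypasses `z` strictly below it.
Well-founded induction on `z` concludes.
-/

open scoped Classical

open Relation

theorem exists_seq_iff_reflTransGen {α : Type*} {Q : α → Prop} {R : α → α → Prop} {x y : α} :
    (∃ (k : ℕ) (p : ℕ → α), (∀ i ≤ k, Q (p i)) ∧ (∀ i < k, R (p i) (p (i + 1))) ∧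
        p 0 = x ∧ p k = y) ↔
      Q x ∧ ReflTransGen (fun a c => Q a ∧ Q c ∧ R a c) x y := by
  constructor
  · rintro ⟨k, p, hQ, hR, rfl, rfl⟩
    refine ⟨hQ 0 k.zero_le, ?_⟩
    induction k with
    | zero => exact .refl
    | succ k ih =>
      exact (ih (fun i hi => hQ i (by omega)) (fun i hi => hR i (by omega))).tail
        ⟨hQ k (by omega), hQ (k + 1) le_rfl, hR k (by omega)⟩
  · rintro ⟨hx, h⟩
    induction h with
    | refl => exact ⟨0, fun _ => x, fun _ _ => hx, fun i hi => absurd hi i.not_lt_zero, rfl, rfl⟩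
    | @tail c d _ hcd ih =>
      obtain ⟨k, p, hQ, hR, hp0, hpk⟩ := ih
      refine ⟨k + 1, fun i => if i ≤ k then p i else d, fun i hi => ?_, fun i hi => ?_,
        by simpa using hp0, by simp⟩
      · show Q (if i ≤ k then p i else d)
        split_ifs with h
        exacts [hQ i h, hcd.2.1]
      · rcases Nat.lt_succ_iff_lt_or_eq.mp hi with hi | rfl
        · simpa [hi.le, Nat.succ_le_of_lt hi] using hR i hi
        · simpa [hpk] using hcd.2.2

section FiberGraph

variable {ι : Type*} {L : AddSubgroup (ι → ℤ)} {S : Set (ι → ℤ)} {b : ι → ℤ}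
  {P P' : (ι → ℤ) → Prop} {succ : (ι → ℤ) → (ι → ℤ) → Prop} {x y w : ι → ℤ}

def FiberAdj (L : AddSubgroup (ι → ℤ)) (S : Set (ι → ℤ)) (b : ι → ℤ) (P : (ι → ℤ) → Prop)
    (x y : ι → ℤ) : Prop :=
  (inFiber L b x ∧ P x) ∧ (inFiber L b y ∧ P y) ∧ adjS S x y

/-- `x` and `y` are joined in `G(F_{L,b}, S)` by a path all of whose nodes, endpoints included,
satisfy `P`; `exists_seq_iff_reflTransGen` translates to the `(k, p)` paths of `IsPathIn`. -/
def ConnWithin (L : AddSubgroup (ι → ℤ)) (S : Set (ι → ℤ)) (b : ι → ℤ) (P : (ι → ℤ) → Prop)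
    (x y : ι → ℤ) : Prop :=
  (inFiber L b x ∧ P x) ∧ ReflTransGen (FiberAdj L S b P) x y

def DecreasingAdj (L : AddSubgroup (ι → ℤ)) (S : Set (ι → ℤ)) (b : ι → ℤ)
    (succ : (ι → ℤ) → (ι → ℤ) → Prop) (x y : ι → ℤ) : Prop :=
  inFiber L b x ∧ inFiber L b y ∧ adjS S x y ∧ succ x y

instance : Std.Symm (FiberAdj L S b P) where
  symm _ _ h := ⟨h.2.1, h.1, h.2.2.symm⟩

theorem ConnWithin.right (h : ConnWithin L S b P x y) : inFiber L b y ∧ P y := by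
  rcases h.2.cases_tail with rfl | ⟨_, _, hy⟩
  exacts [h.1, hy.2.1]

theorem ConnWithin.symm (h : ConnWithin L S b P x y) : ConnWithin L S b P y x :=
  ⟨h.right, symm_of (ReflTransGen _) h.2⟩

theorem ConnWithin.trans (hxy : ConnWithin L S b P x y) (hyw : ConnWithin L S b P y w) :
    ConnWithin L S b P x w :=
  ⟨hxy.1, hxy.2.trans hyw.2⟩

theorem ConnWithin.mono (hP : ∀ v, inFiber L b v → P v → P' v) (h : ConnWithin L S b P x y) :
    ConnWithin L S b P' x y := by
  refine ⟨⟨h.1.1, hP x h.1.1 h.1.2⟩, ReflTransGen.mono ?_ _ _ h.2⟩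
  rintro a c ⟨⟨ha, hPa⟩, ⟨hc, hPc⟩, hac⟩
  exact ⟨⟨ha, hP a ha hPa⟩, ⟨hc, hP c hc hPc⟩, hac⟩

theorem isRedPath_iff (hirr : ∀ v, ¬ succ v v) :
    IsRedPath L S b succ x y ↔ ConnWithin L S b (fun v => ¬ (succ v x ∧ succ v y)) x y := by
  refine Iff.trans ?_ (exists_seq_iff_reflTransGen
    (Q := fun v => inFiber L b v ∧ ¬ (succ v x ∧ succ v y)) (R := adjS S))
  constructor
  · rintro ⟨k, p, ⟨hfib, hadj⟩, rfl, rfl, hred⟩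
    refine ⟨k, p, fun i hi => ⟨hfib i hi, ?_⟩, hadj, rfl, rfl⟩
    rcases Nat.eq_zero_or_pos i with rfl | hi0
    · exact fun h => hirr _ h.1
    rcases hi.lt_or_eq with hik | rfl
    · exact hred i hi0 hik
    · exact fun h => hirr _ h.2
  · rintro ⟨k, p, hQ, hadj, hp0, hpk⟩
    exact ⟨k, p, ⟨fun i hi => (hQ i hi).1, hadj⟩, hp0, hpk, fun i _ hi => (hQ i hi.le).2⟩

theorem IsRedPath.connIn (h : IsRedPath L S b succ x y) : ConnIn L S b x y :=
  let ⟨k, p, hp, hp0, hpk, _⟩ := h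
  ⟨k, p, hp, hp0, hpk⟩

theorem ConnIn.connWithin (h : ConnIn L S b x y) : ConnWithin L S b (fun _ => True) x y := by
  obtain ⟨k, p, ⟨hfib, hadj⟩, hp0, hpk⟩ := h
  exact (exists_seq_iff_reflTransGen (Q := fun v => inFiber L b v ∧ True) (R := adjS S)).mp
    ⟨k, p, fun i hi => ⟨hfib i hi, trivial⟩, hadj, hp0, hpk⟩

theorem exists_decreasing_path_iff :
    (∃ k p, IsPathIn L S b k p ∧ p 0 = x ∧ p k = y ∧ ∀ i < k, succ (p i) (p (i + 1))) ↔
      inFiber L b x ∧ ReflTransGen (DecreasingAdj L S b succ) x y := by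
  refine Iff.trans ?_ (exists_seq_iff_reflTransGen (Q := inFiber L b)
    (R := fun a c => adjS S a c ∧ succ a c))
  constructor
  · rintro ⟨k, p, ⟨hfib, hadj⟩, hp0, hpk, hdec⟩
    exact ⟨k, p, hfib, fun i hi => ⟨hadj i hi, hdec i hi⟩, hp0, hpk⟩
  · rintro ⟨k, p, hfib, hstep, hp0, hpk⟩
    exact ⟨k, p, ⟨hfib, fun i hi => (hstep i hi).1⟩, hp0, hpk, fun i hi => (hstep i hi).2⟩

theorem inFiber_congr {b' : ι → ℤ} (h : b - b' ∈ L) : inFiber L b x ↔ inFiber L b' x := by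
  have key : x - b' = (x - b) + (b - b') := by abel
  exact and_congr_right fun _ => by rw [key, AddSubgroup.add_mem_cancel_right L h]

end FiberGraph

section TermOrder

variable {ι : Type*} {L : AddSubgroup (ι → ℤ)} {G : Set (ι → ℤ)} {b : ι → ℤ}
  {succ : (ι → ℤ) → (ι → ℤ) → Prop} {x y z m : ι → ℤ}

theorem IsTermOrder.asymm (hto : IsTermOrder L succ) (h : succ x y) : ¬ succ y x :=
  fun h' => hto.irrefl x (hto.trans h h')

theorem IsTermOrder.eq_or_succ_of_not_succ (hto : IsTermOrder L succ) (hx : inFiber L b x)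
    (hy : inFiber L b y) (h : ¬ succ x y) : x = y ∨ succ y x := by
  by_cases hxy : x = y
  · exact .inl hxy
  · exact .inr ((hto.total b x y hx hy hxy).resolve_left h)

theorem IsTermOrder.succ_add_of_not_succ {γ : ι → ℤ} (hto : IsTermOrder L succ)
    (hx : inFiber L b x) (hy : inFiber L b y) (hxy : ¬ succ x y) (hγ : Nonneg γ)
    (hzy : succ z (y + γ)) : succ z (x + γ) := by
  rcases hto.eq_or_succ_of_not_succ hx hy hxy with rfl | hyx
  · exact hzy
  · exact hto.trans hzy (hto.additive _ _ _ hγ hyx)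

theorem IsMinimalFiber.eq (hto : IsTermOrder L succ) {m' : ι → ℤ}
    (hm : IsMinimalFiber L b succ m) (hm' : IsMinimalFiber L b succ m') : m = m' := by
  by_contra hne
  exact hto.asymm (hm.2 m' hm'.1 (Ne.symm hne)) (hm'.2 m hm.1 hne)

theorem IsTermOrder.exists_isMinimalFiber (hto : IsTermOrder L succ) (hx : inFiber L b x) :
    ∃ m, IsMinimalFiber L b succ m := by
  obtain ⟨m, hm, hmin⟩ := (hto.wf b).has_min {y | inFiber L b y} ⟨x, hx⟩
  refine ⟨m, hm, fun y hy hne => ?_⟩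
  exact ((hto.eq_or_succ_of_not_succ hm hy fun h => hmin y hy ⟨hy, hm, h⟩).resolve_left
    (Ne.symm hne))

/-- `g⁺ ≻ g⁻` propagates to `a + g ≻ a` by adding `a - g⁻ ≥ 0` to both sides. -/
theorem IsTermOrder.add_succ_of_mem_Lpos (hto : IsTermOrder L succ) {g a : ι → ℤ}
    (hg : g ∈ Lpos L succ) (ha : Nonneg a) (hag : Nonneg (a + g)) : succ (a + g) a := by
  have hγ : Nonneg (a - vnegPart g) := fun i => by
    have := ha i
    have := hag i
    simp only [Pi.add_apply] at this
    simp only [Pi.sub_apply, vnegPart]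
    omega
  have hpos : vposPart g + (a - vnegPart g) = a + g := by
    funext i
    simp only [Pi.add_apply, Pi.sub_apply, vposPart, vnegPart]
    omega
  have hneg : vnegPart g + (a - vnegPart g) = a := by abel
  simpa only [hpos, hneg] using hto.additive _ _ _ hγ hg.2

theorem IsTermOrder.sub_mem_of_adjS (hto : IsTermOrder L succ) (hG : G ⊆ Lpos L succ)
    (hx : Nonneg x) (hz : Nonneg z) (hxz : adjS G x z) (hzx : succ z x) : z - x ∈ G := by
  refine hxz.resolve_left fun h => hto.asymm hzx ?_
  simpa using hto.add_succ_of_mem_Lpos (hG h) hz (by simpa using hx)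

end TermOrder

section Groebner

variable {ι : Type*} {L : AddSubgroup (ι → ℤ)} {G : Set (ι → ℤ)} {b : ι → ℤ}
  {succ : (ι → ℤ) → (ι → ℤ) → Prop} {x y m : ι → ℤ}

theorem decreasingAdj_congr {b' : ι → ℤ} (h : b - b' ∈ L) :
    DecreasingAdj L G b succ = DecreasingAdj L G b' succ := by
  funext x y
  simp only [DecreasingAdj, inFiber_congr h]

theorem IsGroebner.exists_decreasing (hgb : IsGroebner L succ G) (hx : inFiber L b x) :
    ∃ m, IsMinimalFiber L b succ m ∧ ReflTransGen (DecreasingAdj L G b succ) x m := by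
  obtain ⟨m, hm, hpath⟩ := hgb x hx.1
  rw [exists_decreasing_path_iff, decreasingAdj_congr hx.2] at hpath
  simp only [IsMinimalFiber, inFiber_congr hx.2] at hm
  exact ⟨m, hm, hpath.2⟩

theorem connWithin_of_decreasing (hto : IsTermOrder L succ) (hx : inFiber L b x)
    (h : ReflTransGen (DecreasingAdj L G b succ) x y) :
    ConnWithin L G b (fun v => ¬ succ v x) x y := by
  suffices ConnWithin L G b (fun v => ¬ succ v x) x y ∧ (y = x ∨ succ x y) from this.1
  induction h with
  | refl => exact ⟨⟨⟨hx, hto.irrefl x⟩, .refl⟩, .inl rfl⟩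
  | @tail c d _ hcd ih =>
    obtain ⟨hc, hd, hadj, hcd⟩ := hcd
    have hxd : succ x d := ih.2.elim (fun h => h ▸ hcd) (fun h => hto.trans h hcd)
    have hcx : ¬ succ c x := ih.2.elim (fun h => h ▸ hto.irrefl x) hto.asymm
    exact ⟨⟨ih.1.1, ih.1.2.tail ⟨⟨hc, hcx⟩, ⟨hd, hto.asymm hxd⟩, hadj⟩⟩, .inr hxd⟩

theorem IsGroebner.isRedPath (hto : IsTermOrder L succ) (hgb : IsGroebner L succ G)
    (hx : inFiber L b x) (hy : inFiber L b y) : IsRedPath L G b succ x y := by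
  obtain ⟨m, hm, hxm⟩ := hgb.exists_decreasing hx
  obtain ⟨m', hm', hym⟩ := hgb.exists_decreasing hy
  obtain rfl := hm.eq hto hm'
  rw [isRedPath_iff hto.irrefl]
  exact ((connWithin_of_decreasing hto hx hxm).mono fun v _ hv h => hv h.1).trans
    ((connWithin_of_decreasing hto hy hym).mono fun v _ hv h => hv h.2).symm

/-- Well-founded induction on `x`: a reduction path from `x` to the minimum stays `≼ x`, so its
first node other than `x` is `≺ x` and is reached by a decreasing edge. -/
theorem decreasing_of_forall_isRedPath (hto : IsTermOrder L succ)
    (hred : ∀ x y, inFiber L b x → inFiber L b y → IsRedPath L G b succ x y)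
    (hm : IsMinimalFiber L b succ m) (hx : inFiber L b x) :
    ReflTransGen (DecreasingAdj L G b succ) x m := by
  induction x using (hto.wf b).induction with
  | _ x ih =>
  have hxm : x = m ∨ succ x m := by
    by_cases h : x = m
    exacts [.inl h, .inr (hm.2 x hx h)]
  have hpath : ConnWithin L G b (fun v => ¬ succ v x) x m :=
    ((isRedPath_iff hto.irrefl).mp (hred x m hx hm.1)).mono fun v _ hv hvx =>
      hv ⟨hvx, hxm.elim (fun h => h ▸ hvx) (hto.trans hvx)⟩
  refine ReflTransGen.head_induction_on (motive := fun a _ => ReflTransGen _ a m) hpath.2 .refl ?_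
  rintro a c ⟨⟨ha, hax⟩, ⟨hc, hcx⟩, hadj⟩ - hcm
  rcases hto.eq_or_succ_of_not_succ ha hx hax with rfl | hxa
  · rcases hto.eq_or_succ_of_not_succ hc ha hcx with rfl | hac
    exacts [hcm, .head ⟨ha, hc, hadj, hac⟩ hcm]
  · exact ih a ⟨ha, hx, hxa⟩ ha

theorem isGroebner_iff_forall_isRedPath (hto : IsTermOrder L succ) :
    IsGroebner L succ G ↔
      ∀ b x y, inFiber L b x → inFiber L b y → IsRedPath L G b succ x y := by
  refine ⟨fun hgb b x y hx hy => hgb.isRedPath hto hx hy, fun hred x hx => ?_⟩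
  have hxx : inFiber L x x := ⟨hx, by simp⟩
  obtain ⟨m, hm⟩ := hto.exists_isMinimalFiber hxx
  exact ⟨m, hm, exists_decreasing_path_iff.mpr
    ⟨hxx, decreasing_of_forall_isRedPath hto (hred x) hm hxx⟩⟩

end Groebner

section CriticalPaths

variable {ι : Type*} {L : AddSubgroup (ι → ℤ)} {G : Set (ι → ℤ)} {b : ι → ℤ}
  {P : (ι → ℤ) → Prop} {succ : (ι → ℤ) → (ι → ℤ) → Prop} {u v x y z : ι → ℤ}

theorem adjS.add_right {S : Set (ι → ℤ)} (h : adjS S x y) (γ : ι → ℤ) :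
    adjS S (x + γ) (y + γ) := by
  simpa only [adjS, add_sub_add_right_eq_sub] using h

theorem inFiber_zOf_xOf (hu : u ∈ L) : inFiber L (zOf u v) (xOf u v) := by
  refine ⟨fun i => ?_, by simpa [xOf] using neg_mem hu⟩
  simp only [xOf, zOf, vposPart, Pi.sub_apply]
  omega

theorem inFiber_zOf_yOf (hv : v ∈ L) : inFiber L (zOf u v) (yOf u v) := by
  refine ⟨fun i => ?_, by simpa [yOf] using neg_mem hv⟩
  simp only [yOf, zOf, vposPart, Pi.sub_apply]
  omega

theorem IsCriticalIn.connWithin_below (hto : IsTermOrder L succ) (hG : G ⊆ Lpos L succ)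
    (hpairs : ∀ u ∈ G, ∀ v ∈ G, IsRedPath L G (zOf u v) succ (xOf u v) (yOf u v))
    (hcrit : IsCriticalIn L G b succ x z y) : ConnWithin L G b (succ z) x y := by
  obtain ⟨hx, hz, hy, hadj_xz, hadj_zy, hzx, hzy⟩ := hcrit
  have hu := hto.sub_mem_of_adjS hG hx.1 hz.1 hadj_xz hzx
  have hv := hto.sub_mem_of_adjS hG hy.1 hz.1 hadj_zy.symm hzy
  set u := z - x
  set v := z - y
  have hx₀ := inFiber_zOf_xOf (v := v) (hG hu).1
  have hy₀ := inFiber_zOf_yOf (u := u) (hG hv).1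
  set γ := z - zOf u v
  have hγ : Nonneg γ := fun i => by
    have := hx.1 i; have := hy.1 i; have := hz.1 i
    simp only [γ, u, v, zOf, vposPart, Pi.sub_apply]
    omega
  have hxγ : xOf u v + γ = x := by simp only [xOf, γ, u]; abel
  have hyγ : yOf u v + γ = y := by simp only [yOf, γ, v]; abel
  have hnode : ∀ w, inFiber L (zOf u v) w ∧ ¬ (succ w (xOf u v) ∧ succ w (yOf u v)) →
      inFiber L b (w + γ) ∧ succ z (w + γ) := by
    rintro w ⟨hw, hP⟩
    refine ⟨⟨fun i => add_nonneg (hw.1 i) (hγ i), ?_⟩, ?_⟩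
    · convert add_mem hw.2 hz.2 using 1
      simp only [γ]; abel
    · rcases not_and_or.mp hP with h | h
      · exact hto.succ_add_of_not_succ hw hx₀ h hγ (by rwa [hxγ])
      · exact hto.succ_add_of_not_succ hw hy₀ h hγ (by rwa [hyγ])
  have hpath := ReflTransGen.lift (p := FiberAdj L G b (succ z)) (· + γ)
    (fun a c ⟨ha, hc, hac⟩ => ⟨hnode a ha, hnode c hc, hac.add_right γ⟩) _ _
    ((isRedPath_iff hto.irrefl).mp (hpairs u hu v hv)).2
  simp only [Function.onFun, hxγ, hyγ] at hpath
  exact ⟨⟨hx, hzx⟩, hpath⟩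

/-- A path through nodes `≼ z` is cut at its visits of `z`, each visit being the peak of a
critical path that `hcrit` bypasses below `z`. -/
theorem ConnWithin.below_of_forall_isCriticalIn (hto : IsTermOrder L succ)
    (hz : inFiber L b z)
    (hcrit : ∀ x y, IsCriticalIn L G b succ x z y → ConnWithin L G b (succ z) x y)
    (hxz : x ≠ z) (hyz : y ≠ z) (h : ConnWithin L G b (fun w => ¬ succ w z) x y) :
    ConnWithin L G b (succ z) x y := by
  have below : ∀ {w}, inFiber L b w → ¬ succ w z → w ≠ z → succ z w := fun hw hwz hne =>
    (hto.eq_or_succ_of_not_succ hw hz hwz).resolve_left hne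
  have hx : inFiber L b x ∧ succ z x := ⟨h.1.1, below h.1.1 h.1.2 hxz⟩
  suffices ∀ y, ReflTransGen (FiberAdj L G b fun w => ¬ succ w z) x y →
      (y ≠ z → ConnWithin L G b (succ z) x y) ∧
      (y = z → ∃ w, ConnWithin L G b (succ z) x w ∧ inFiber L b w ∧ adjS G w z ∧ succ z w) from
    (this y h.2).1 hyz
  intro y h
  induction h with
  | refl => exact ⟨fun _ => ⟨hx, .refl⟩, fun h => absurd h hxz⟩
  | @tail c d _ hcd ih =>
    obtain ⟨⟨hc, hcz⟩, ⟨hd, hdz⟩, hadj⟩ := hcd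
    by_cases hcz' : c = z
    · obtain ⟨w, hxw, hw, hwz, hzw⟩ := ih.2 hcz'
      subst hcz'
      exact ⟨fun hdz' => hxw.trans (hcrit w d ⟨hw, hc, hd, hwz, hadj, hzw, below hd hdz hdz'⟩),
        fun _ => ⟨w, hxw, hw, hwz, hzw⟩⟩
    · have hxc := ih.1 hcz'
      have hzc := below hc hcz hcz'
      exact ⟨fun hdz' => ⟨hx, hxc.2.tail ⟨⟨hc, hzc⟩, ⟨hd, below hd hdz hdz'⟩, hadj⟩⟩,
        fun hdz' => ⟨c, hxc, hc, hdz' ▸ hadj, hzc⟩⟩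

theorem ConnWithin.exists_max (hto : IsTermOrder L succ) (h : ConnWithin L G b P x y) :
    ∃ w, inFiber L b w ∧ P w ∧ ConnWithin L G b (fun v => ¬ succ v w) x y := by
  obtain ⟨⟨hx, hPx⟩, h⟩ := h
  induction h with
  | refl => exact ⟨x, hx, hPx, ⟨hx, hto.irrefl x⟩, .refl⟩
  | @tail c d _ hcd ih =>
    obtain ⟨w, hw, hPw, hxcw⟩ := ih
    obtain ⟨-, ⟨hd, hPd⟩, hadj⟩ := hcd
    have hc := hxcw.right
    by_cases hdw : succ d w
    · have hcd : ¬ succ c d := fun hcd => hc.2 (hto.trans hcd hdw)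
      exact ⟨d, hd, hPd, (hxcw.mono fun v _ hvw hvd => hvw (hto.trans hvd hdw)).trans
        ⟨⟨hc.1, hcd⟩, .single ⟨⟨hc.1, hcd⟩, ⟨hd, hto.irrefl d⟩, hadj⟩⟩⟩
    · exact ⟨w, hw, hPw, hxcw.1, hxcw.2.tail ⟨hc, ⟨hd, hdw⟩, hadj⟩⟩

theorem ConnWithin.isRedPath (hto : IsTermOrder L succ)
    (hcrit : ∀ x z y, IsCriticalIn L G b succ x z y → ConnWithin L G b (succ z) x y)
    (hz : inFiber L b z) (h : ConnWithin L G b (fun w => ¬ succ w z) x y) :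
    IsRedPath L G b succ x y := by
  induction z using (hto.wf b).induction generalizing x y with
  | _ z ih =>
  rw [isRedPath_iff hto.irrefl]
  by_cases hxz : x = z
  · exact h.mono fun w _ hw hwx => hw (hxz ▸ hwx.1)
  by_cases hyz : y = z
  · exact h.mono fun w _ hw hwx => hw (hyz ▸ hwx.2)
  obtain ⟨w, hw, hzw, hxy⟩ :=
    (h.below_of_forall_isCriticalIn hto hz (hcrit · z ·) hxz hyz).exists_max hto
  exact (isRedPath_iff hto.irrefl).mp (ih w ⟨hw, hz, hzw⟩ hw hxy)

theorem ConnIn.isRedPath (hto : IsTermOrder L succ)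
    (hcrit : ∀ x z y, IsCriticalIn L G b succ x z y → ConnWithin L G b (succ z) x y)
    (h : ConnIn L G b x y) : IsRedPath L G b succ x y := by
  obtain ⟨w, hw, -, hxy⟩ := h.connWithin.exists_max hto
  exact hxy.isRedPath hto hcrit hw

end CriticalPaths

theorem stmt5_general {n : ℕ} (L : AddSubgroup (Fin n → ℤ))
    (succ : (Fin n → ℤ) → (Fin n → ℤ) → Prop) (hto : IsTermOrder L succ)
    (G : Set (Fin n → ℤ)) (hG : G ⊆ Lpos L succ) :
    IsGroebner L succ G ↔
      (IsGenSet L G ∧ ∀ u ∈ G, ∀ v ∈ G,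
        IsRedPath L G (zOf u v) succ (xOf u v) (yOf u v)) := by
  rw [isGroebner_iff_forall_isRedPath hto]
  constructor
  · intro hred
    exact ⟨fun b x y hx hy => (hred b x y hx hy).connIn, fun u hu v hv =>
      hred _ _ _ (inFiber_zOf_xOf (hG hu).1) (inFiber_zOf_yOf (hG hv).1)⟩
  · rintro ⟨hgen, hpairs⟩ b x y hx hy
    exact (hgen b x y hx hy).isRedPath hto fun _ _ _ hcrit =>
      hcrit.connWithin_below hto hG hpairs

/-- `G ⊆ L_≻` is a `≻`-Gröbner basis of `L` iff `G` is a
generating set of `L` and for each pair `u,v ∈ G` there exists a `≻`-reduction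
path between `x^(u,v)` and `y^(u,v)` in `G(F_{L,z^(u,v)},G)`. -/
theorem stmt5 {n : ℕ} (L : AddSubgroup (Fin n → ℤ))
    (hL : ∀ u ∈ L, Nonneg u → u = 0)
    (succ : (Fin n → ℤ) → (Fin n → ℤ) → Prop) (hto : IsTermOrder L succ)
    (G : Set (Fin n → ℤ)) (hG : G ⊆ Lpos L succ) :
    IsGroebner L succ G ↔
      (IsGenSet L G ∧ ∀ u ∈ G, ∀ v ∈ G,
        IsRedPath L G (zOf u v) succ (xOf u v) (yOf u v)) :=
  stmt5_general L succ hto G hG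
end
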